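/- Write ρ1 = A1·w + B1 and ρ2 = A2·w + B2 as polynomials in w, where A1 = p99·z² + p79·z + p59, B1 = −z⁶ + p89z⁵ + p69z⁴ + p49z³ + p39z² + p29z + p19, A2 = −2z³ + (p89 − p999)z² + (p78 − p799)z + (p58 − p599), B2 = (p88 − p899)z⁵ + (p68 − p699)z⁴ + (p48 − p499)z³ + (p38 − p399)z² + (p28 − p299)z + (p18 − p199). Then the resultant A1·B2 − A2·B1 of ρ1 and ρ2 with respect to w, viewed as a polynomial in z with coefficients in R, has degree exactly 9 and leading coefficient the constant −2. Consequently, for any commutative ring S, any ring homomorphism R → S, and any elements z, w ∈ S with ρ1(z,w) = 0 and ρ2(z,w) = 0, z is a root of the resulting degree-9 polynomial with invertible (unit times) constant leading coefficient −2. -/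

import Mathlib

open Polynomial

/- The coefficient ring is `R = MvPolynomial (Fin 26) ℤ`, with the indeterminates indexed as
follows:
 0 ↦ p19, 1 ↦ p29, 2 ↦ p39, 3 ↦ p49, 4 ↦ p59, 5 ↦ p69, 6 ↦ p79, 7 ↦ p89, 8 ↦ p99,
 9 ↦ p18, 10 ↦ p28, 11 ↦ p38, 12 ↦ p48, 13 ↦ p58, 14 ↦ p68, 15 ↦ p78, 16 ↦ p88,
 17 ↦ p199, 18 ↦ p299, 19 ↦ p399, 20 ↦ p499, 21 ↦ p599, 22 ↦ p699, 23 ↦ p799,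
 24 ↦ p899, 25 ↦ p999. -/

/-- The `i`-th indeterminate of `R`, viewed as a constant polynomial in `z`. -/
noncomputable def v (i : Fin 26) : Polynomial (MvPolynomial (Fin 26) ℤ) :=
  Polynomial.C (MvPolynomial.X i)

/-- `A1 = p99·z² + p79·z + p59`, the coefficient of `w` in `ρ1`. -/
noncomputable def A1 : Polynomial (MvPolynomial (Fin 26) ℤ) := v 8 * X ^ 2 + v 6 * X + v 4

/-- `B1 = −z⁶ + p89z⁵ + p69z⁴ + p49z³ + p39z² + p29z + p19`. -/
noncomputable def B1 : Polynomial (MvPolynomial (Fin 26) ℤ) :=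
  -X ^ 6 + v 7 * X ^ 5 + v 5 * X ^ 4 + v 3 * X ^ 3 + v 2 * X ^ 2 + v 1 * X + v 0

/-- `A2 = −2z³ + (p89 − p999)z² + (p78 − p799)z + (p58 − p599)`, the coefficient of `w` in `ρ2`. -/
noncomputable def A2 : Polynomial (MvPolynomial (Fin 26) ℤ) :=
  -2 * X ^ 3 + (v 7 - v 25) * X ^ 2 + (v 15 - v 23) * X + (v 13 - v 21)

/-- `B2 = (p88 − p899)z⁵ + (p68 − p699)z⁴ + (p48 − p499)z³ + (p38 − p399)z² + (p28 − p299)z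
  + (p18 − p199)`. -/
noncomputable def B2 : Polynomial (MvPolynomial (Fin 26) ℤ) :=
  (v 16 - v 24) * X ^ 5 + (v 14 - v 22) * X ^ 4 + (v 12 - v 20) * X ^ 3
    + (v 11 - v 19) * X ^ 2 + (v 10 - v 18) * X + (v 9 - v 17)

/-- The resultant `A1·B2 − A2·B1` of `ρ1` and `ρ2` with respect to `w`, for the (3,10)-curve. -/
noncomputable def res310 : Polynomial (MvPolynomial (Fin 26) ℤ) := A1 * B2 - A2 * B1

/- Over the domain `R`, `A2·B1` has degree `3 + 6 = 9` and leading coefficient `(−2)(−1) = 2`,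
while `A1·B2` has degree at most `2 + 5 = 7`; so `A2·B1` alone determines the top of the
resultant. The root property is elimination of `w`: `A1·B2 − A2·B1 = A1·ρ2 − A2·ρ1`. -/

theorem Polynomial.eval₂_mul_sub_mul_eq_zero_of_eval₂_mul_add_eq_zero {R S : Type*}
    [CommRing R] [CommRing S] (φ : R →+* S) (z w : S) {a₁ b₁ a₂ b₂ : R[X]}
    (h₁ : a₁.eval₂ φ z * w + b₁.eval₂ φ z = 0) (h₂ : a₂.eval₂ φ z * w + b₂.eval₂ φ z = 0) :
    (a₁ * b₂ - a₂ * b₁).eval₂ φ z = 0 := by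
  rw [eval₂_sub, eval₂_mul, eval₂_mul]
  linear_combination a₁.eval₂ φ z * h₂ - a₂.eval₂ φ z * h₁

lemma degree_A1_le : A1.degree ≤ 2 := by unfold A1 v; compute_degree

lemma degree_B2_le : B2.degree ≤ 5 := by unfold B2 v; compute_degree

lemma A2_eq_cubic : A2 = C (-2) * X ^ 3 + C (MvPolynomial.X 7 - MvPolynomial.X 25) * X ^ 2
    + C (MvPolynomial.X 15 - MvPolynomial.X 23) * X
    + C (MvPolynomial.X 13 - MvPolynomial.X 21) := by
  simp [A2, v, ← C_ofNat]

lemma degree_A2 : A2.degree = 3 := A2_eq_cubic ▸ degree_cubic (neg_ne_zero.mpr two_ne_zero)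

lemma leadingCoeff_A2 : A2.leadingCoeff = -2 :=
  A2_eq_cubic ▸ leadingCoeff_cubic (neg_ne_zero.mpr two_ne_zero)

lemma degree_B1 : B1.degree = 6 := by unfold B1 v; compute_degree!

lemma leadingCoeff_B1 : B1.leadingCoeff = -1 := by
  rw [leadingCoeff, natDegree_eq_of_degree_eq_some degree_B1]
  simp [B1, v]

lemma A2_mul_degree_B1 : (A2 * B1).degree = 9 := by
  rw [degree_mul, degree_A2, degree_B1]; rfl

lemma degree_A1_mul_B2_lt : (A1 * B2).degree < (A2 * B1).degree :=
  calc (A1 * B2).degree ≤ A1.degree + B2.degree := degree_mul_le _ _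
    _ ≤ 2 + 5 := add_le_add degree_A1_le degree_B2_le
    _ < (A2 * B1).degree := by rw [A2_mul_degree_B1]; decide

lemma degree_res310 : res310.degree = 9 := by
  rw [res310, degree_sub_eq_right_of_degree_lt degree_A1_mul_B2_lt, A2_mul_degree_B1]

lemma leadingCoeff_res310 : res310.leadingCoeff = -2 := by
  rw [res310, leadingCoeff_sub_of_degree_lt' degree_A1_mul_B2_lt, leadingCoeff_mul,
    leadingCoeff_A2, leadingCoeff_B1]
  ring

/-- the resultant has degree exactly 9 in `z` with leading coefficient the
constant `−2`; consequently for any commutative ring `S`, ring homomorphism `R → S` and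
elements `z, w` of `S` with `ρ1(z,w) = 0` and `ρ2(z,w) = 0`, `z` is a root of the resulting
degree-9 polynomial. -/
theorem stmt_2 :
    res310.degree = 9 ∧ res310.leadingCoeff = -2 ∧
    ∀ (S : Type*) [CommRing S] (φ : MvPolynomial (Fin 26) ℤ →+* S) (z w : S),
      (-z ^ 6 + φ (MvPolynomial.X 7) * z ^ 5 + φ (MvPolynomial.X 5) * z ^ 4
          + φ (MvPolynomial.X 3) * z ^ 3
          + (φ (MvPolynomial.X 8) * w + φ (MvPolynomial.X 2)) * z ^ 2
          + (φ (MvPolynomial.X 1) + φ (MvPolynomial.X 6) * w) * z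
          + φ (MvPolynomial.X 4) * w + φ (MvPolynomial.X 0) = 0) →
      ((φ (MvPolynomial.X 16) - φ (MvPolynomial.X 24)) * z ^ 5
          + (φ (MvPolynomial.X 14) - φ (MvPolynomial.X 22)) * z ^ 4
          + (φ (MvPolynomial.X 12) - 2 * w - φ (MvPolynomial.X 20)) * z ^ 3
          + (φ (MvPolynomial.X 11) + φ (MvPolynomial.X 7) * w - φ (MvPolynomial.X 25) * w
              - φ (MvPolynomial.X 19)) * z ^ 2
          + (φ (MvPolynomial.X 10) + φ (MvPolynomial.X 15) * w - φ (MvPolynomial.X 23) * w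
              - φ (MvPolynomial.X 18)) * z
          + φ (MvPolynomial.X 13) * w - φ (MvPolynomial.X 21) * w
          + φ (MvPolynomial.X 9) - φ (MvPolynomial.X 17) = 0) →
      Polynomial.eval₂ φ z res310 = 0 := by
  refine ⟨degree_res310, leadingCoeff_res310, fun S _ φ z w h₁ h₂ => ?_⟩
  apply eval₂_mul_sub_mul_eq_zero_of_eval₂_mul_add_eq_zero φ z w
  · simp only [A1, B1, v, eval₂_add, eval₂_mul, eval₂_pow, eval₂_X, eval₂_C, eval₂_neg]
    linear_combination h₁
  · simp only [A2, B2, v, eval₂_add, eval₂_sub, eval₂_mul, eval₂_pow, eval₂_X, eval₂_C,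
      eval₂_neg, eval₂_ofNat]
    linear_combination h₂
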